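/- arXiv:0708.0512 — 4 statements merged into one kernel-verified Lean document; each statement's English description precedes it below -/
import Mathlib

section
/- Let M(S) be the set of equivalent martingale measures for a strictly positive bounded ℝ^d-valued discrete-time process (S_t)_{t=0,…,T} adapted to (F_t), with S¹ ≡ 1. If Q, Q¹, …, Q^k ∈ M(S), τ-fixed time t ∈ {0,…,T}, F_t¹,…,F_t^k is an F_t-measurable partition of Ω, and Z, Z¹,…,Z^k are the densities with Z^i > 0, then the measure ℝ with density Y = Σ_i 1_{F_t^i} (Z_t / Z_t^i) Z^i is again in M(S), where Z_t = E[Z|F_t]. -/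
open MeasureTheory Filter

/-- `Z` is the density (w.r.t. `P`) of an equivalent martingale measure for the
`d`-dimensional price process `S` over times `0,…,T`. -/
def IsEMMDensity {Ω : Type} {mΩ : MeasurableSpace Ω} (P : Measure Ω)
    (ℱ : Filtration ℕ mΩ) (T d : ℕ) (S : ℕ → Ω → Fin d → ℝ) (Z : Ω → ℝ) : Prop :=
  Integrable Z P ∧ (∀ᵐ ω ∂P, 0 < Z ω) ∧ (∫ ω, Z ω ∂P = 1) ∧
  ∀ i : Fin d, ∀ s t : ℕ, s ≤ t → t ≤ T →
    (P.withDensity fun ω => ENNReal.ofReal (Z ω))[(fun ω => S t ω i) | ℱ s]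
      =ᵐ[P] fun ω => S s ω i

/-! On `F i` the pasted density is `Z' i` times the `ℱ t`-measurable factor `Z_t / Z_tⁱ`, and
conditioning on `ℱ t` turns this product into `Z_t`. Hence against `ℱ t`-measurable weights the
pasted density integrates exactly like `Z`: this gives total mass one and the martingale property
up to time `t`. After time `t` the pasted measure is, on each `F i`, the measure `Qⁱ` reweighted by
an `ℱ t`-measurable factor, under which `S` is still a martingale. The martingale property is
handled through nonnegative test weights, so that no integrability of products is ever needed. -/

open scoped ENNReal

section CondExp

variable {Ω : Type*} {m mΩ : MeasurableSpace Ω} {μ : Measure Ω} {f g : Ω → ℝ}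

theorem condExp_pos_ae (hm : m ≤ mΩ) [SigmaFinite (μ.trim hm)] (hf : Integrable f μ)
    (hf_pos : ∀ᵐ ω ∂μ, 0 < f ω) : ∀ᵐ ω ∂μ, 0 < μ[f|m] ω := by
  set A := {ω | μ[f|m] ω ≤ 0}
  have hA : MeasurableSet[m] A :=
    measurableSet_le stronglyMeasurable_condExp.measurable measurable_const
  have hf0 : 0 ≤ᵐ[μ.restrict A] f := ae_restrict_of_ae (hf_pos.mono fun _ h => h.le)
  have hint : ∫ ω in A, f ω ∂μ = 0 := by
    refine le_antisymm ?_ (setIntegral_nonneg_of_ae_restrict hf0)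
    rw [← setIntegral_condExp hm hf hA]
    exact setIntegral_nonpos_of_ae_restrict ((ae_restrict_mem (hm A hA)).mono fun _ h => h)
  have hfA : ∀ᵐ ω ∂μ, ω ∈ A → f ω = 0 :=
    (ae_restrict_iff' (hm A hA)).1
      ((setIntegral_eq_zero_iff_of_nonneg_ae hf0 hf.integrableOn).1 hint)
  filter_upwards [hfA, hf_pos] with ω hfA hpos
  exact not_le.1 fun hω => hpos.ne' (hfA hω)

theorem trim_withDensity_ofReal_condExp (hm : m ≤ mΩ) [SigmaFinite (μ.trim hm)]
    (hf : Integrable f μ) (hf0 : 0 ≤ᵐ[μ] f) :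
    (μ.withDensity fun ω => ENNReal.ofReal (μ[f|m] ω)).trim hm
      = (μ.withDensity fun ω => ENNReal.ofReal (f ω)).trim hm := by
  refine @Measure.ext Ω m _ _ fun A hA => ?_
  rw [trim_measurableSet_eq hm hA, trim_measurableSet_eq hm hA, withDensity_apply _ (hm A hA),
    withDensity_apply _ (hm A hA),
    ← ofReal_integral_eq_lintegral_ofReal integrable_condExp.integrableOn
      (ae_restrict_of_ae (condExp_nonneg hf0)),
    ← ofReal_integral_eq_lintegral_ofReal hf.integrableOn (ae_restrict_of_ae hf0),
    setIntegral_condExp hm hf hA]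

theorem lintegral_mul_ofReal_condExp (hm : m ≤ mΩ) [SigmaFinite (μ.trim hm)]
    (hf : Integrable f μ) (hf0 : 0 ≤ᵐ[μ] f) {h : Ω → ℝ≥0∞} (hh : Measurable[m] h) :
    ∫⁻ ω, h ω * ENNReal.ofReal (μ[f|m] ω) ∂μ = ∫⁻ ω, h ω * ENNReal.ofReal (f ω) ∂μ := by
  have h_trim : ∀ g : Ω → ℝ, AEMeasurable g μ → ∫⁻ ω, h ω * ENNReal.ofReal (g ω) ∂μ
      = ∫⁻ ω, h ω ∂(μ.withDensity fun ω => ENNReal.ofReal (g ω)).trim hm := by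
    intro g hg
    rw [lintegral_trim hm hh, lintegral_withDensity_eq_lintegral_mul₀' hg.ennreal_ofReal
      (hh.mono hm le_rfl).aemeasurable]
    simp only [Pi.mul_apply, mul_comm]
  rw [h_trim _ integrable_condExp.aemeasurable, h_trim _ hf.aemeasurable,
    trim_withDensity_ofReal_condExp hm hf hf0]

theorem condExp_ae_eq_iff_lintegral_mul_ofReal (hm : m ≤ mΩ) [SigmaFinite (μ.trim hm)]
    (hf : Integrable f μ) (hf0 : 0 ≤ᵐ[μ] f) (hg : Integrable g μ) (hg0 : 0 ≤ᵐ[μ] g)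
    (hgm : StronglyMeasurable[m] g) :
    μ[f|m] =ᵐ[μ] g ↔ ∀ h : Ω → ℝ≥0∞, Measurable[m] h →
      ∫⁻ ω, h ω * ENNReal.ofReal (f ω) ∂μ = ∫⁻ ω, h ω * ENNReal.ofReal (g ω) ∂μ := by
  refine ⟨fun hfg h hh => ?_, fun H => ?_⟩
  · rw [← lintegral_mul_ofReal_condExp hm hf hf0 hh]
    exact lintegral_congr_ae (hfg.mono fun ω hω => by simp only [hω])
  refine (ae_eq_condExp_of_forall_setIntegral_eq hm hf (fun _ _ _ => hg.integrableOn)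
    (fun A hA _ => ?_) hgm.aestronglyMeasurable).symm
  have hA' := hm A hA
  have h_ind : ∀ F : Ω → ℝ≥0∞, ∫⁻ ω, A.indicator 1 ω * F ω ∂μ = ∫⁻ ω in A, F ω ∂μ := fun F => by
    rw [← lintegral_indicator hA']
    exact lintegral_congr fun ω => by by_cases hω : ω ∈ A <;> simp [hω]
  have hA_lintegral := H (A.indicator 1) (measurable_const.indicator hA)
  rw [h_ind, h_ind] at hA_lintegral
  rw [integral_eq_lintegral_of_nonneg_ae (ae_restrict_of_ae hg0) hg.1.restrict,
    integral_eq_lintegral_of_nonneg_ae (ae_restrict_of_ae hf0) hf.1.restrict, hA_lintegral]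

theorem Integrable.of_memLp_top_of_absolutelyContinuous {ν : Measure Ω} [IsFiniteMeasure ν]
    (hf : MemLp f ⊤ μ) (hνμ : ν ≪ μ) (hfm : AEStronglyMeasurable f ν) : Integrable f ν := by
  refine MemLp.integrable le_top ⟨hfm, ?_⟩
  have hf_top := hf.2
  rw [eLpNorm_exponent_top] at hf_top ⊢
  exact (eLpNormEssSup_mono_measure f hνμ).trans_lt hf_top

end CondExp

section Pasting

variable {Ω ι : Type*} [Fintype ι] {m mΩ : MeasurableSpace Ω} {P : Measure Ω}
  {F : ι → Set Ω} {Z : Ω → ℝ} {Z' : ι → Ω → ℝ}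

/-- On `F i` the density `Z' i`, rescaled so that its conditional expectation given `m`
becomes that of `Z`. -/
noncomputable def pasteDensity (P : Measure Ω) (m : MeasurableSpace Ω) (F : ι → Set Ω) (Z : Ω → ℝ)
    (Z' : ι → Ω → ℝ) : Ω → ℝ :=
  fun ω => ∑ i, (F i).indicator (fun ω => P[Z|m] ω / P[Z' i|m] ω * Z' i ω) ω

theorem pasteDensity_eq_of_mem (hFdisj : Pairwise (Function.onFun Disjoint F)) {i : ι} {ω : Ω}
    (hω : ω ∈ F i) : pasteDensity P m F Z Z' ω = P[Z|m] ω / P[Z' i|m] ω * Z' i ω := by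
  rw [pasteDensity, Finset.sum_eq_single_of_mem i (Finset.mem_univ i), Set.indicator_of_mem hω]
  exact fun j _ hji => Set.indicator_of_notMem (Set.disjoint_left.1 (hFdisj hji) · hω) _

theorem aestronglyMeasurable_pasteDensity (hm : m ≤ mΩ) (hF : ∀ i, MeasurableSet[m] (F i))
    (hZ' : ∀ i, AEStronglyMeasurable (Z' i) P) :
    AEStronglyMeasurable (pasteDensity P m F Z Z') P :=
  Finset.aestronglyMeasurable_fun_sum _ fun i _ =>
    ((((stronglyMeasurable_condExp.mono hm).div
      (stronglyMeasurable_condExp.mono hm)).aestronglyMeasurable).mul (hZ' i)).indicator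
      (hm _ (hF i))

theorem pasteDensity_pos (hm : m ≤ mΩ) [SigmaFinite (P.trim hm)]
    (hFdisj : Pairwise (Function.onFun Disjoint F)) (hFcover : ⋃ i, F i = Set.univ)
    (hZ : Integrable Z P) (hZ_pos : ∀ᵐ ω ∂P, 0 < Z ω) (hZ' : ∀ i, Integrable (Z' i) P)
    (hZ'_pos : ∀ i, ∀ᵐ ω ∂P, 0 < Z' i ω) : ∀ᵐ ω ∂P, 0 < pasteDensity P m F Z Z' ω := by
  have hcond' : ∀ᵐ ω ∂P, ∀ i, 0 < P[Z' i|m] ω :=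
    ae_all_iff.2 fun i => condExp_pos_ae hm (hZ' i) (hZ'_pos i)
  filter_upwards [condExp_pos_ae hm hZ hZ_pos, hcond', ae_all_iff.2 hZ'_pos]
    with ω hcond hcond' hZ'_pos
  obtain ⟨i, hi⟩ := Set.iUnion_eq_univ_iff.1 hFcover ω
  rw [pasteDensity_eq_of_mem hFdisj hi]
  exact mul_pos (div_pos hcond (hcond' i)) (hZ'_pos i)

theorem lintegral_mul_ofReal_pasteDensity (hm : m ≤ mΩ) (hF : ∀ i, MeasurableSet[m] (F i))
    (hFdisj : Pairwise (Function.onFun Disjoint F)) (hFcover : ⋃ i, F i = Set.univ)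
    (hZ0 : 0 ≤ᵐ[P] Z) (hZ'0 : ∀ i, 0 ≤ᵐ[P] Z' i) (w : Ω → ℝ≥0∞) :
    ∫⁻ ω, w ω * ENNReal.ofReal (pasteDensity P m F Z Z' ω) ∂P
      = ∑ i, ∫⁻ ω, (F i).indicator (fun ω => ENNReal.ofReal (P[Z|m] ω / P[Z' i|m] ω)) ω
          * w ω * ENNReal.ofReal (Z' i ω) ∂P := by
  have hF' : ∀ i, MeasurableSet (F i) := fun i => hm _ (hF i)
  rw [← setLIntegral_univ, ← hFcover, lintegral_iUnion hF' hFdisj, tsum_fintype]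
  refine Finset.sum_congr rfl fun i _ => ?_
  rw [← lintegral_indicator (hF' i)]
  refine lintegral_congr_ae ?_
  filter_upwards [condExp_nonneg (m := m) hZ0, condExp_nonneg (m := m) (hZ'0 i)]
    with ω hcond hcond'
  by_cases hω : ω ∈ F i
  · simp only [Set.indicator_of_mem hω, pasteDensity_eq_of_mem hFdisj hω,
      ENNReal.ofReal_mul (div_nonneg hcond hcond')]
    ring
  · simp only [Set.indicator_of_notMem hω, zero_mul]

theorem lintegral_mul_ofReal_pasteDensity_of_measurable (hm : m ≤ mΩ)
    [SigmaFinite (P.trim hm)] (hF : ∀ i, MeasurableSet[m] (F i))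
    (hFdisj : Pairwise (Function.onFun Disjoint F)) (hFcover : ⋃ i, F i = Set.univ)
    (hZ : Integrable Z P) (hZ0 : 0 ≤ᵐ[P] Z) (hZ' : ∀ i, Integrable (Z' i) P)
    (hZ'_pos : ∀ i, ∀ᵐ ω ∂P, 0 < Z' i ω) {w : Ω → ℝ≥0∞} (hw : Measurable[m] w) :
    ∫⁻ ω, w ω * ENNReal.ofReal (pasteDensity P m F Z Z' ω) ∂P
      = ∫⁻ ω, w ω * ENNReal.ofReal (Z ω) ∂P := by
  have hF' : ∀ i, MeasurableSet (F i) := fun i => hm _ (hF i)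
  have hZ'0 : ∀ i, 0 ≤ᵐ[P] Z' i := fun i => (hZ'_pos i).mono fun _ h => h.le
  rw [lintegral_mul_ofReal_pasteDensity hm hF hFdisj hFcover hZ0 hZ'0,
    ← lintegral_mul_ofReal_condExp hm hZ hZ0 hw, ← setLIntegral_univ, ← hFcover,
    lintegral_iUnion hF' hFdisj, tsum_fintype]
  refine Finset.sum_congr rfl fun i _ => ?_
  have hweight : Measurable[m] fun ω =>
      (F i).indicator (fun ω => ENNReal.ofReal (P[Z|m] ω / P[Z' i|m] ω)) ω * w ω :=
    ((stronglyMeasurable_condExp.measurable.div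
      stronglyMeasurable_condExp.measurable).ennreal_ofReal.indicator (hF i)).mul hw
  rw [← lintegral_mul_ofReal_condExp hm (hZ' i) (hZ'0 i) hweight, ← lintegral_indicator (hF' i)]
  refine lintegral_congr_ae ?_
  filter_upwards [condExp_nonneg (m := m) hZ0, condExp_pos_ae hm (hZ' i) (hZ'_pos i)]
    with ω hcond hcond'
  by_cases hω : ω ∈ F i
  · rw [Set.indicator_of_mem hω, Set.indicator_of_mem hω, mul_right_comm,
      ← ENNReal.ofReal_mul (div_nonneg hcond hcond'.le), div_mul_cancel₀ _ hcond'.ne', mul_comm]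
  · simp only [Set.indicator_of_notMem hω, zero_mul]

theorem lintegral_ofReal_pasteDensity (hm : m ≤ mΩ) [SigmaFinite (P.trim hm)]
    (hF : ∀ i, MeasurableSet[m] (F i))
    (hFdisj : Pairwise (Function.onFun Disjoint F)) (hFcover : ⋃ i, F i = Set.univ)
    (hZ : Integrable Z P) (hZ0 : 0 ≤ᵐ[P] Z) (hZ' : ∀ i, Integrable (Z' i) P)
    (hZ'_pos : ∀ i, ∀ᵐ ω ∂P, 0 < Z' i ω) :
    ∫⁻ ω, ENNReal.ofReal (pasteDensity P m F Z Z' ω) ∂P = ∫⁻ ω, ENNReal.ofReal (Z ω) ∂P := by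
  simpa only [one_mul] using lintegral_mul_ofReal_pasteDensity_of_measurable hm hF hFdisj
    hFcover hZ hZ0 hZ' hZ'_pos (w := fun _ => 1) measurable_const

theorem integrable_pasteDensity (hm : m ≤ mΩ) [SigmaFinite (P.trim hm)]
    (hF : ∀ i, MeasurableSet[m] (F i)) (hFdisj : Pairwise (Function.onFun Disjoint F))
    (hFcover : ⋃ i, F i = Set.univ) (hZ : Integrable Z P) (hZ_pos : ∀ᵐ ω ∂P, 0 < Z ω)
    (hZ' : ∀ i, Integrable (Z' i) P) (hZ'_pos : ∀ i, ∀ᵐ ω ∂P, 0 < Z' i ω) :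
    Integrable (pasteDensity P m F Z Z') P := by
  have hZ0 : 0 ≤ᵐ[P] Z := hZ_pos.mono fun _ h => h.le
  refine ⟨aestronglyMeasurable_pasteDensity hm hF fun i => (hZ' i).1, ?_⟩
  rw [hasFiniteIntegral_iff_ofReal
      ((pasteDensity_pos hm hFdisj hFcover hZ hZ_pos hZ' hZ'_pos).mono fun _ h => h.le),
    lintegral_ofReal_pasteDensity hm hF hFdisj hFcover hZ hZ0 hZ' hZ'_pos]
  exact (hasFiniteIntegral_iff_ofReal hZ0).1 hZ.2

theorem integral_pasteDensity (hm : m ≤ mΩ) [SigmaFinite (P.trim hm)]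
    (hF : ∀ i, MeasurableSet[m] (F i)) (hFdisj : Pairwise (Function.onFun Disjoint F))
    (hFcover : ⋃ i, F i = Set.univ) (hZ : Integrable Z P) (hZ_pos : ∀ᵐ ω ∂P, 0 < Z ω)
    (hZ' : ∀ i, Integrable (Z' i) P) (hZ'_pos : ∀ i, ∀ᵐ ω ∂P, 0 < Z' i ω) :
    ∫ ω, pasteDensity P m F Z Z' ω ∂P = ∫ ω, Z ω ∂P := by
  have hZ0 : 0 ≤ᵐ[P] Z := hZ_pos.mono fun _ h => h.le
  rw [integral_eq_lintegral_of_nonneg_ae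
      ((pasteDensity_pos hm hFdisj hFcover hZ hZ_pos hZ' hZ'_pos).mono fun _ h => h.le)
      (aestronglyMeasurable_pasteDensity hm hF fun i => (hZ' i).1),
    integral_eq_lintegral_of_nonneg_ae hZ0 hZ.1,
    lintegral_ofReal_pasteDensity hm hF hFdisj hFcover hZ hZ0 hZ' hZ'_pos]

end Pasting

section EMM

variable {Ω : Type} {mΩ : MeasurableSpace Ω} {P : Measure Ω} {ℱ : Filtration ℕ mΩ} {T d : ℕ}
  {S : ℕ → Ω → Fin d → ℝ}

/-- The martingale property of `S` under `Z • P`, tested against nonnegative `ℱ s`-measurable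
weights: the form in which it survives pasting. -/
def IsMartingaleDensity (P : Measure Ω) (ℱ : Filtration ℕ mΩ) (T d : ℕ)
    (S : ℕ → Ω → Fin d → ℝ) (Z : Ω → ℝ) : Prop :=
  ∀ j : Fin d, ∀ s u : ℕ, s ≤ u → u ≤ T → ∀ h : Ω → ℝ≥0∞, Measurable[ℱ s] h →
    ∫⁻ ω, h ω * ENNReal.ofReal (S u ω j) * ENNReal.ofReal (Z ω) ∂P
      = ∫⁻ ω, h ω * ENNReal.ofReal (S s ω j) * ENNReal.ofReal (Z ω) ∂P

theorem isEMMDensity_iff_isMartingaleDensity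
    (hSbdd : ∀ t, t ≤ T → ∀ i, MemLp (fun ω => S t ω i) ⊤ P)
    (hS0 : ∀ t, t ≤ T → ∀ i, ∀ᵐ ω ∂P, 0 ≤ S t ω i)
    (hSadapted : ∀ t, t ≤ T → ∀ i, Measurable[ℱ t] (fun ω => S t ω i))
    {Z : Ω → ℝ} (hZ : Integrable Z P) (hZ_pos : ∀ᵐ ω ∂P, 0 < Z ω) (hZ1 : ∫ ω, Z ω ∂P = 1) :
    IsEMMDensity P ℱ T d S Z ↔ IsMartingaleDensity P ℱ T d S Z := by
  set Q := P.withDensity fun ω => ENNReal.ofReal (Z ω)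
  have : IsFiniteMeasure Q := isFiniteMeasure_withDensity_ofReal hZ.2
  have hQP : Q ≪ P := withDensity_absolutelyContinuous _ _
  have hPQ : P ≪ Q := withDensity_absolutelyContinuous' hZ.aemeasurable.ennreal_ofReal
    (hZ_pos.mono fun _ h => (ENNReal.ofReal_pos.2 h).ne')
  have hSm : ∀ v ≤ T, ∀ j, Measurable fun ω => S v ω j := fun v hv j =>
    (hSadapted v hv j).mono (ℱ.le v) le_rfl
  have hSint : ∀ v ≤ T, ∀ j, Integrable (fun ω => S v ω j) Q := fun v hv j =>
    Integrable.of_memLp_top_of_absolutelyContinuous (hSbdd v hv j) hQP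
      (hSm v hv j).aestronglyMeasurable
  have hQ_lintegral : ∀ v ≤ T, ∀ j, ∀ h : Ω → ℝ≥0∞, Measurable h →
      ∫⁻ ω, h ω * ENNReal.ofReal (S v ω j) ∂Q
        = ∫⁻ ω, h ω * ENNReal.ofReal (S v ω j) * ENNReal.ofReal (Z ω) ∂P := by
    intro v hv j h hh
    rw [lintegral_withDensity_eq_lintegral_mul₀' hZ.aemeasurable.ennreal_ofReal
      (g := fun ω => h ω * ENNReal.ofReal (S v ω j))
      (hh.mul (hSm v hv j).ennreal_ofReal).aemeasurable]
    simp only [Pi.mul_apply, mul_comm]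
  simp only [IsEMMDensity, IsMartingaleDensity, hZ, hZ_pos, hZ1, true_and]
  refine forall_congr' fun j => forall₂_congr fun s u => forall₂_congr fun hsu huT => ?_
  have hsT := hsu.trans huT
  refine (Iff.intro hQP.ae_eq hPQ.ae_eq).trans <| (condExp_ae_eq_iff_lintegral_mul_ofReal (ℱ.le s)
    (hSint u huT j) (hQP.ae_le (hS0 u huT j)) (hSint s hsT j) (hQP.ae_le (hS0 s hsT j))
    (hSadapted s hsT j).stronglyMeasurable).trans ?_
  refine forall_congr' fun h => imp_congr_right fun hh => ?_
  rw [hQ_lintegral u huT j h (hh.mono (ℱ.le s) le_rfl),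
    hQ_lintegral s hsT j h (hh.mono (ℱ.le s) le_rfl)]

theorem isMartingaleDensity_pasteDensity {ι : Type*} [Fintype ι] [IsFiniteMeasure P]
    (hSadapted : ∀ t, t ≤ T → ∀ i, Measurable[ℱ t] (fun ω => S t ω i)) {t : ℕ}
    {F : ι → Set Ω} (hF : ∀ i, MeasurableSet[ℱ t] (F i))
    (hFdisj : Pairwise (Function.onFun Disjoint F)) (hFcover : ⋃ i, F i = Set.univ)
    {Z : Ω → ℝ} {Z' : ι → Ω → ℝ} (hZint : Integrable Z P) (hZ0 : 0 ≤ᵐ[P] Z)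
    (hZ'int : ∀ i, Integrable (Z' i) P) (hZ'_pos : ∀ i, ∀ᵐ ω ∂P, 0 < Z' i ω)
    (hZ : IsMartingaleDensity P ℱ T d S Z) (hZ' : ∀ i, IsMartingaleDensity P ℱ T d S (Z' i)) :
    IsMartingaleDensity P ℱ T d S (pasteDensity P (ℱ t) F Z Z') := by
  have hZ'0 : ∀ i, 0 ≤ᵐ[P] Z' i := fun i => (hZ'_pos i).mono fun _ h => h.le
  have after : ∀ j s u, t ≤ s → s ≤ u → u ≤ T → ∀ h : Ω → ℝ≥0∞, Measurable[ℱ s] h →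
      ∫⁻ ω, h ω * ENNReal.ofReal (S u ω j) * ENNReal.ofReal (pasteDensity P (ℱ t) F Z Z' ω) ∂P
        = ∫⁻ ω, h ω * ENNReal.ofReal (S s ω j)
            * ENNReal.ofReal (pasteDensity P (ℱ t) F Z Z' ω) ∂P := by
    intro j s u hts hsu huT h hh
    simp only [lintegral_mul_ofReal_pasteDensity (ℱ.le t) hF hFdisj hFcover hZ0 hZ'0]
    refine Finset.sum_congr rfl fun i _ => ?_
    have hweight : Measurable[ℱ s] fun ω =>
        (F i).indicator (fun ω => ENNReal.ofReal (P[Z|ℱ t] ω / P[Z' i|ℱ t] ω)) ω * h ω :=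
      (((stronglyMeasurable_condExp.measurable.div
        stronglyMeasurable_condExp.measurable).ennreal_ofReal.indicator (hF i)).mono
          (ℱ.mono hts) le_rfl).mul hh
    simpa only [mul_assoc] using hZ' i j s u hsu huT _ hweight
  have before : ∀ j v, v ≤ t → v ≤ T → ∀ h : Ω → ℝ≥0∞, Measurable[ℱ t] h →
      ∫⁻ ω, h ω * ENNReal.ofReal (S v ω j) * ENNReal.ofReal (pasteDensity P (ℱ t) F Z Z' ω) ∂P
        = ∫⁻ ω, h ω * ENNReal.ofReal (S v ω j) * ENNReal.ofReal (Z ω) ∂P :=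
    fun j v hvt hvT h hh => lintegral_mul_ofReal_pasteDensity_of_measurable (ℱ.le t) hF hFdisj
      hFcover hZint hZ0 hZ'int hZ'_pos
      (hh.mul ((hSadapted v hvT j).mono (ℱ.mono hvt) le_rfl).ennreal_ofReal)
  intro j s u hsu huT h hh
  rcases le_total t s with hts | hst
  · exact after j s u hts hsu huT h hh
  have hh_t : Measurable[ℱ t] h := hh.mono (ℱ.mono hst) le_rfl
  rcases le_total u t with hut | htu
  · rw [before j u hut huT h hh_t, before j s hst (hsu.trans huT) h hh_t]
    exact hZ j s u hsu huT h hh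
  · rw [after j t u le_rfl htu huT h hh_t, before j t le_rfl (htu.trans huT) h hh_t,
      before j s hst (hsu.trans huT) h hh_t]
    exact hZ j s t hst (htu.trans huT) h hh

end EMM

theorem stmt11_general {Ω : Type} {mΩ : MeasurableSpace Ω} (P : Measure Ω) [IsProbabilityMeasure P]
    (ℱ : Filtration ℕ mΩ) (T d : ℕ)
    (S : ℕ → Ω → Fin d → ℝ)
    (hSbdd : ∀ t, t ≤ T → ∀ i, MemLp (fun ω => S t ω i) ⊤ P)
    (hSpos : ∀ t, t ≤ T → ∀ i, ∀ᵐ ω ∂P, 0 < S t ω i)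
    (hSadapted : ∀ t, t ≤ T → ∀ i, Measurable[ℱ t] (fun ω => S t ω i))
    (t : ℕ) (k : ℕ)
    (F : Fin k → Set Ω) (hFmeas : ∀ i, MeasurableSet[ℱ t] (F i))
    (hFdisj : Pairwise (Function.onFun Disjoint F))
    (hFcover : (⋃ i, F i) = Set.univ)
    (Z : Ω → ℝ) (hZ : IsEMMDensity P ℱ T d S Z)
    (Z' : Fin k → Ω → ℝ) (hZ' : ∀ i, IsEMMDensity P ℱ T d S (Z' i)) :
    -- conclusion: Y = Σᵢ 1_{Fᵢ} (Z_t / Z_tⁱ) Zⁱ is again the density of an EMM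
    IsEMMDensity P ℱ T d S (fun ω => ∑ i, (F i).indicator
      (fun ω => (P[Z | ℱ t]) ω / (P[Z' i | ℱ t]) ω * Z' i ω) ω) := by
  have hS0 : ∀ t, t ≤ T → ∀ i, ∀ᵐ ω ∂P, 0 ≤ S t ω i :=
    fun t ht i => (hSpos t ht i).mono fun _ h => h.le
  have hmart {Y : Ω → ℝ} (hY : IsEMMDensity P ℱ T d S Y) : IsMartingaleDensity P ℱ T d S Y :=
    (isEMMDensity_iff_isMartingaleDensity hSbdd hS0 hSadapted hY.1 hY.2.1 hY.2.2.1).1 hY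
  have hZ'int i := (hZ' i).1
  have hZ'_pos i := (hZ' i).2.1
  have hY_int := integrable_pasteDensity (ℱ.le t) hFmeas hFdisj hFcover hZ.1 hZ.2.1 hZ'int hZ'_pos
  have hY_pos := pasteDensity_pos (ℱ.le t) hFdisj hFcover hZ.1 hZ.2.1 hZ'int hZ'_pos
  have hY_one : ∫ ω, pasteDensity P (ℱ t) F Z Z' ω ∂P = 1 :=
    (integral_pasteDensity (ℱ.le t) hFmeas hFdisj hFcover hZ.1 hZ.2.1 hZ'int hZ'_pos).trans
      hZ.2.2.1
  refine (isEMMDensity_iff_isMartingaleDensity hSbdd hS0 hSadapted hY_int hY_pos hY_one).2 ?_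
  exact isMartingaleDensity_pasteDensity hSadapted hFmeas hFdisj hFcover hZ.1
    (hZ.2.1.mono fun _ h => h.le) hZ'int hZ'_pos (hmart hZ) fun i => hmart (hZ' i)

/-- `M(S)` is weakly m-stable: pasting densities `Zⁱ` of EMMs over an
`F_t`-partition with weights `Z_t/Z_tⁱ` yields the density of an EMM. -/
theorem stmt11 {Ω : Type} {mΩ : MeasurableSpace Ω} (P : Measure Ω) [IsProbabilityMeasure P]
    (ℱ : Filtration ℕ mΩ) (T d : ℕ) (hd : 0 < d)
    (S : ℕ → Ω → Fin d → ℝ)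
    (hSbdd : ∀ t, t ≤ T → ∀ i, MemLp (fun ω => S t ω i) ⊤ P)
    (hSpos : ∀ t, t ≤ T → ∀ i, ∀ᵐ ω ∂P, 0 < S t ω i)
    (hSadapted : ∀ t, t ≤ T → ∀ i, Measurable[ℱ t] (fun ω => S t ω i))
    (hS1 : ∀ t, t ≤ T → ∀ ω, S t ω ⟨0, hd⟩ = 1)
    (t : ℕ) (ht : t ≤ T) (k : ℕ)
    (F : Fin k → Set Ω) (hFmeas : ∀ i, MeasurableSet[ℱ t] (F i))
    (hFdisj : Pairwise (Function.onFun Disjoint F))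
    (hFcover : (⋃ i, F i) = Set.univ)
    (Z : Ω → ℝ) (hZ : IsEMMDensity P ℱ T d S Z)
    (Z' : Fin k → Ω → ℝ) (hZ' : ∀ i, IsEMMDensity P ℱ T d S (Z' i)) :
    -- conclusion: Y = Σᵢ 1_{Fᵢ} (Z_t / Z_tⁱ) Zⁱ is again the density of an EMM
    IsEMMDensity P ℱ T d S (fun ω => ∑ i, (F i).indicator
      (fun ω => (P[Z | ℱ t]) ω / (P[Z' i | ℱ t]) ω * Z' i ω) ω) :=
  stmt11_general P ℱ T d S hSbdd hSpos hSadapted t k F hFmeas hFdisj hFcover Z hZ Z' hZ'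
end

section
/- Let B be a weak*-closed convex cone in L^∞(F; ℝ^d) and V = (v₁,…,v_d) strictly positive bounded random variables with bounded reciprocals, v₁ ≡ 1. Define B·V = {X·V : X ∈ B} and (B·V)(V) = {X : X·V ∈ B·V}. Then B ⊆ (B·V)(V), and B = (B·V)(V) if and only if α(v_j e_i − v_i e_j) ∈ B for all α ∈ L^∞₊(F) and all i, j. Moreover, in that case B·V is weak*-closed in L^∞(F). -/
/-!
If `v₁ ≡ 1`, a vector `Z` satisfies `Z·V = 0` exactly when `Z = ∑ᵢ Zᵢ (v₁ eᵢ − vᵢ e₁)`, so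
`(B·V)(V) = B + ker(·V)`. Every `α (v_j e_i − v_i e_j)` lies in that kernel, and splitting a
coefficient into positive and negative parts shows that those with `α ≥ 0` already generate the
kernel as a cone; hence `B = (B·V)(V)` iff they all lie in `B`.

For closedness, `x ↦ x e₁` is a right inverse of `X ↦ X·V` mapping `B·V` into `(B·V)(V) = B`.
So if `W` is in the polar of `B`, then `W₁` is in the polar of `B·V`; for `x` in the bipolar of
`B·V` this gives `∫ (x e₁)·W = ∫ W₁ x ≤ 0`, i.e. `x e₁` lies in the bipolar of `B`, which is `B`,
and `x = (x e₁)·V ∈ B·V`.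
-/

open MeasureTheory Filter

section ExchangeVector

variable {ι R : Type*} [DecidableEq ι] [CommRing R]

/-- The vector `v_j e_i − v_i e_j`. -/
def exchangeVector (v : ι → R) (i j : ι) : ι → R :=
  fun k => v j * (if k = i then 1 else 0) - v i * (if k = j then 1 else 0)

theorem exchangeVector_swap (v : ι → R) (i j : ι) :
    exchangeVector v j i = -exchangeVector v i j := by
  funext k
  simp only [exchangeVector, Pi.neg_apply]
  ring

variable [Fintype ι]

theorem sum_exchangeVector_mul_self (v : ι → R) (i j : ι) :
    ∑ k, exchangeVector v i j k * v k = 0 := by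
  simp only [exchangeVector, sub_mul, mul_assoc, ite_mul, one_mul, zero_mul,
    Finset.sum_sub_distrib, ← Finset.mul_sum, Finset.sum_ite_eq', Finset.mem_univ, if_true]
  ring

theorem sum_smul_exchangeVector {v z : ι → R} {i₀ : ι} (hv : v i₀ = 1)
    (hz : ∑ i, z i * v i = 0) : ∑ i, z i • exchangeVector v i i₀ = z := by
  funext k
  simp only [Finset.sum_apply, Pi.smul_apply, smul_eq_mul, exchangeVector, hv, mul_sub,
    Finset.sum_sub_distrib, mul_ite, mul_one, mul_zero, Finset.sum_ite_eq, Finset.mem_univ, if_true]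
  split_ifs <;> simp [hz]

end ExchangeVector

section Polar

variable {Ω ι : Type*} {mΩ : MeasurableSpace Ω} {P : Measure Ω} [Fintype ι]

theorem integrable_sum_mul_of_memLp_top {X W : ι → Ω → ℝ} (hX : ∀ i, MemLp (X i) ⊤ P)
    (hW : ∀ i, Integrable (W i) P) : Integrable (fun ω => ∑ i, X i ω * W i ω) P :=
  integrable_finsetSum _ fun i _ => (hW i).mul_of_top_right (hX i)

theorem memLp_top_sum_mul {X V : ι → Ω → ℝ} (hX : ∀ i, MemLp (X i) ⊤ P)
    (hV : ∀ i, MemLp (V i) ⊤ P) : MemLp (fun ω => ∑ i, X i ω * V i ω) ⊤ P :=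
  memLp_finsetSum _ fun i _ => (hV i).mul' (hX i)

/-- For `Q` the polar of `B`, this is the bipolar of `B` in the duality `(L^∞, L¹)`, i.e. the
weak*-closed convex cone generated by `B`. -/
def boundedPolar (P : Measure Ω) (Q : (ι → Ω → ℝ) → Prop) : Set (ι → Ω → ℝ) :=
  {X | (∀ i, MemLp (X i) ⊤ P) ∧ ∀ W : ι → Ω → ℝ, (∀ i, Integrable (W i) P) → Q W →
    ∫ ω, ∑ i, X i ω * W i ω ∂P ≤ 0}

theorem zero_mem_boundedPolar (Q : (ι → Ω → ℝ) → Prop) : 0 ∈ boundedPolar P Q :=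
  ⟨fun _ => MemLp.zero, fun _ _ _ => by simp⟩

theorem add_mem_boundedPolar {Q : (ι → Ω → ℝ) → Prop} {X Y : ι → Ω → ℝ}
    (hX : X ∈ boundedPolar P Q) (hY : Y ∈ boundedPolar P Q) : X + Y ∈ boundedPolar P Q := by
  refine ⟨fun i => (hX.1 i).add (hY.1 i), fun W hW hQ => ?_⟩
  calc ∫ ω, ∑ i, (X + Y) i ω * W i ω ∂P
      = ∫ ω, ∑ i, X i ω * W i ω ∂P + ∫ ω, ∑ i, Y i ω * W i ω ∂P := by
        rw [← integral_add (integrable_sum_mul_of_memLp_top hX.1 hW)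
          (integrable_sum_mul_of_memLp_top hY.1 hW)]
        simp only [Pi.add_apply, add_mul, Finset.sum_add_distrib]
    _ ≤ 0 := add_nonpos (hX.2 W hW hQ) (hY.2 W hW hQ)

end Polar

section LiftedCone

variable {Ω ι : Type*} {mΩ : MeasurableSpace Ω} {P : Measure Ω} {B : Set (ι → Ω → ℝ)}
  {V : ι → Ω → ℝ}

section Exchange

variable [DecidableEq ι]

def exchange (V : ι → Ω → ℝ) (α : Ω → ℝ) (i j : ι) : ι → Ω → ℝ :=
  fun k ω => α ω * exchangeVector (fun l => V l ω) i j k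

theorem memLp_top_exchange (hV : ∀ i, MemLp (V i) ⊤ P) {α : Ω → ℝ} (hα : MemLp α ⊤ P)
    (i j k : ι) : MemLp (exchange V α i j k) ⊤ P :=
  (((hV j).mul_const _).sub ((hV i).mul_const _)).mul' hα

theorem exchange_eq_posPart_add_negPart (V : ι → Ω → ℝ) (β : Ω → ℝ) (i j : ι) :
    exchange V β i j =
      exchange V (fun ω => max (β ω) 0) i j + exchange V (fun ω => max (-β ω) 0) j i := by
  funext k ω
  simp only [exchange, exchangeVector_swap _ i j, Pi.add_apply, Pi.neg_apply]
  conv_lhs => rw [← max_zero_sub_max_neg_zero_eq_self (β ω)]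
  ring

theorem memLp_top_single {x : Ω → ℝ} (hx : MemLp x ⊤ P) (i₀ i : ι) :
    MemLp ((Pi.single i₀ x : ι → Ω → ℝ) i) ⊤ P := by
  rcases eq_or_ne i i₀ with rfl | hi
  · simpa using hx
  · simp [hi]

theorem exchange_mem_of_forall_nonneg (hBadd : ∀ X ∈ B, ∀ Y ∈ B, X + Y ∈ B)
    (hgen : ∀ α : Ω → ℝ, MemLp α ⊤ P → 0 ≤ᵐ[P] α → ∀ i j, exchange V α i j ∈ B)
    {β : Ω → ℝ} (hβ : MemLp β ⊤ P) (i j : ι) : exchange V β i j ∈ B := by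
  rw [exchange_eq_posPart_add_negPart]
  exact hBadd _ (hgen _ hβ.pos_part (.of_forall fun _ => le_max_right _ _) i j)
    _ (hgen _ hβ.neg_part (.of_forall fun _ => le_max_right _ _) j i)

end Exchange

variable [Fintype ι]

/-- `dotSet B V` is `B·V` and `liftCone P B V` is `(B·V)(V)`. -/
def dotSet (B : Set (ι → Ω → ℝ)) (V : ι → Ω → ℝ) : Set (Ω → ℝ) :=
  {x | ∃ Y ∈ B, x = fun ω => ∑ i, Y i ω * V i ω}

def liftCone (P : Measure Ω) (B : Set (ι → Ω → ℝ)) (V : ι → Ω → ℝ) : Set (ι → Ω → ℝ) :=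
  {X | (∀ i, MemLp (X i) ⊤ P) ∧
    ∃ Y ∈ B, (fun ω => ∑ i, X i ω * V i ω) = fun ω => ∑ i, Y i ω * V i ω}

theorem subset_liftCone (hBsub : ∀ X ∈ B, ∀ i, MemLp (X i) ⊤ P) : B ⊆ liftCone P B V :=
  fun X hX => ⟨hBsub X hX, X, hX, rfl⟩

theorem memLp_top_of_mem_dotSet (hBsub : ∀ X ∈ B, ∀ i, MemLp (X i) ⊤ P)
    (hV : ∀ i, MemLp (V i) ⊤ P) {x : Ω → ℝ} (hx : x ∈ dotSet B V) : MemLp x ⊤ P := by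
  obtain ⟨Y, hY, rfl⟩ := hx
  exact memLp_top_sum_mul (hBsub Y hY) hV

variable [DecidableEq ι]

theorem exchange_mem_liftCone (hV : ∀ i, MemLp (V i) ⊤ P) (hB0 : 0 ∈ B) {α : Ω → ℝ}
    (hα : MemLp α ⊤ P) (i j : ι) : exchange V α i j ∈ liftCone P B V := by
  refine ⟨memLp_top_exchange hV hα i j, 0, hB0, funext fun ω => ?_⟩
  simp only [exchange, mul_assoc, ← Finset.mul_sum, sum_exchangeVector_mul_self, Pi.zero_apply,
    zero_mul, Finset.sum_const_zero, mul_zero]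

theorem eq_add_sum_exchange {i₀ : ι} (hV : V i₀ = 1) {X Y : ι → Ω → ℝ}
    (hXY : (fun ω => ∑ i, X i ω * V i ω) = fun ω => ∑ i, Y i ω * V i ω) :
    X = Y + ∑ i, exchange V (X i - Y i) i i₀ := by
  funext k ω
  have hz : ∑ i, (X i ω - Y i ω) * V i ω = 0 := by
    simp only [sub_mul, Finset.sum_sub_distrib, congrFun hXY ω, sub_self]
  have := congrFun (sum_smul_exchangeVector (v := fun l => V l ω) (congrFun hV ω) hz) k
  simp only [Finset.sum_apply, Pi.smul_apply, smul_eq_mul] at this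
  simp only [Pi.add_apply, Finset.sum_apply, exchange, Pi.sub_apply, this]
  ring

theorem liftCone_subset_of_exchange_mem (hB0 : 0 ∈ B) (hBadd : ∀ X ∈ B, ∀ Y ∈ B, X + Y ∈ B)
    (hBsub : ∀ X ∈ B, ∀ i, MemLp (X i) ⊤ P) {i₀ : ι} (hV : V i₀ = 1)
    (hgen : ∀ α : Ω → ℝ, MemLp α ⊤ P → 0 ≤ᵐ[P] α → ∀ i j, exchange V α i j ∈ B) :
    liftCone P B V ⊆ B := by
  rintro X ⟨hX, Y, hY, hXY⟩
  rw [eq_add_sum_exchange hV hXY]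
  refine hBadd _ hY _ (Finset.sum_induction _ (· ∈ B) (fun X Y hX hY => hBadd X hX Y hY) hB0
    fun i _ => ?_)
  exact exchange_mem_of_forall_nonneg hBadd hgen ((hX i).sub (hBsub Y hY i)) i i₀

theorem sum_single_mul (i₀ : ι) (x : Ω → ℝ) (W : ι → Ω → ℝ) (ω : Ω) :
    ∑ i, (Pi.single i₀ x : ι → Ω → ℝ) i ω * W i ω = W i₀ ω * x ω := by
  rw [Fintype.sum_eq_single i₀ fun i hi => by simp [hi]]
  simp [mul_comm]

theorem single_mem_liftCone {i₀ : ι} (hV : V i₀ = 1) {x : Ω → ℝ} (hx : MemLp x ⊤ P)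
    (hxB : x ∈ dotSet B V) : Pi.single i₀ x ∈ liftCone P B V := by
  obtain ⟨Y, hY, rfl⟩ := hxB
  exact ⟨memLp_top_single hx i₀, Y, hY, funext fun ω => by simp [sum_single_mul, hV]⟩

theorem dotSet_eq_bipolar
    (hB : boundedPolar P (fun W => ∀ Y ∈ B, ∫ ω, ∑ i, Y i ω * W i ω ∂P ≤ 0) ⊆ B)
    (hBsub : ∀ X ∈ B, ∀ i, MemLp (X i) ⊤ P) (hVbdd : ∀ i, MemLp (V i) ⊤ P) {i₀ : ι}
    (hV : V i₀ = 1) (hBlift : liftCone P B V ⊆ B) :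
    dotSet B V = {x | MemLp x ⊤ P ∧ ∀ Z : Ω → ℝ, Integrable Z P →
      (∀ y ∈ dotSet B V, ∫ ω, Z ω * y ω ∂P ≤ 0) → ∫ ω, Z ω * x ω ∂P ≤ 0} := by
  ext x
  constructor
  · intro hx
    exact ⟨memLp_top_of_mem_dotSet hBsub hVbdd hx, fun Z _ hZ => hZ x hx⟩
  · rintro ⟨hx, hxpol⟩
    have hsingle : (Pi.single i₀ x : ι → Ω → ℝ) ∈ B := by
      refine hB ⟨memLp_top_single hx i₀, fun W hW hWpol => ?_⟩
      have hW₀ : ∀ y ∈ dotSet B V, ∫ ω, W i₀ ω * y ω ∂P ≤ 0 := fun y hy => by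
        simpa only [sum_single_mul] using
          hWpol _ (hBlift (single_mem_liftCone hV (memLp_top_of_mem_dotSet hBsub hVbdd hy) hy))
      simpa only [sum_single_mul] using hxpol _ (hW i₀) hW₀
    exact ⟨_, hsingle, funext fun ω => by simp [sum_single_mul, hV]⟩

end LiftedCone

theorem stmt15_general {Ω : Type} {mΩ : MeasurableSpace Ω} (P : Measure Ω)
    (d : ℕ) (hd : 0 < d)
    (B : Set (Fin d → Ω → ℝ))
    (hBsub : ∀ X ∈ B, ∀ i, MemLp (X i) ⊤ P)
    -- B is a weak*-closed convex cone: B equals its bipolar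
    (hBclosed : B = {X : Fin d → Ω → ℝ | (∀ i, MemLp (X i) ⊤ P) ∧
        ∀ W : Fin d → Ω → ℝ, (∀ i, Integrable (W i) P) →
          (∀ Y ∈ B, ∫ ω, ∑ i, Y i ω * W i ω ∂P ≤ 0) →
          ∫ ω, ∑ i, X i ω * W i ω ∂P ≤ 0})
    (V : Fin d → Ω → ℝ)
    (hVbdd : ∀ i, MemLp (V i) ⊤ P)
    (hV1 : V ⟨0, hd⟩ = fun _ => 1) :
    -- (B·V)(V) = {X ∈ L^∞(ℝ^d) : X·V ∈ B·V}
    (let BVV : Set (Fin d → Ω → ℝ) := {X | (∀ i, MemLp (X i) ⊤ P) ∧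
        ∃ Y ∈ B, (fun ω => ∑ i, X i ω * V i ω) = fun ω => ∑ i, Y i ω * V i ω};
     B ⊆ BVV ∧
     ((B = BVV) ↔
       (∀ α : Ω → ℝ, MemLp α ⊤ P → (0 : Ω → ℝ) ≤ᵐ[P] α → ∀ i j : Fin d,
         (fun k ω => α ω * (V j ω * (if k = i then (1 : ℝ) else 0)
            - V i ω * (if k = j then (1 : ℝ) else 0))) ∈ B)) ∧
     ((B = BVV) →
       {x : Ω → ℝ | ∃ Y ∈ B, x = fun ω => ∑ i, Y i ω * V i ω}
         = {x : Ω → ℝ | MemLp x ⊤ P ∧ ∀ Z : Ω → ℝ, Integrable Z P →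
             (∀ y : Ω → ℝ, (∃ Y ∈ B, y = fun ω => ∑ i, Y i ω * V i ω) →
               ∫ ω, Z ω * y ω ∂P ≤ 0) →
             ∫ ω, Z ω * x ω ∂P ≤ 0})) := by
  intro BVV
  have hB : B = boundedPolar P fun W => ∀ Y ∈ B, ∫ ω, ∑ i, Y i ω * W i ω ∂P ≤ 0 := hBclosed
  have hB0 : 0 ∈ B := hB.symm.subset (zero_mem_boundedPolar _)
  have hBadd : ∀ X ∈ B, ∀ Y ∈ B, X + Y ∈ B := fun X hX Y hY =>
    hB.symm.subset (add_mem_boundedPolar (hB.subset hX) (hB.subset hY))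
  refine ⟨subset_liftCone hBsub, ⟨fun hBeq α hα _ i j => ?_, fun hgen => ?_⟩, fun hBeq => ?_⟩
  · exact hBeq.symm.subset (exchange_mem_liftCone hVbdd hB0 hα i j)
  · exact (subset_liftCone hBsub).antisymm (liftCone_subset_of_exchange_mem hB0 hBadd hBsub hV1 hgen)
  · exact dotSet_eq_bipolar hB.symm.subset hBsub hVbdd hV1 hBeq.symm.subset

/-- for a weak*-closed convex cone `B ⊂ L^∞(ℝ^d)` (encoded by the bipolar
condition `B = B**` in the duality `(L^∞, L¹)`) and a vector `V` of strictly positive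
bounded assets with bounded reciprocals and `V₁ ≡ 1`:
`B ⊆ (B·V)(V)`; `B = (B·V)(V)` iff `α(v_j e_i − v_i e_j) ∈ B` for all `α ∈ L^∞₊` and
all `i, j`; and in that case `B·V` is weak*-closed (it equals its bipolar). -/
theorem stmt15 {Ω : Type} {mΩ : MeasurableSpace Ω} (P : Measure Ω) [IsProbabilityMeasure P]
    (d : ℕ) (hd : 0 < d)
    (B : Set (Fin d → Ω → ℝ))
    (hBsub : ∀ X ∈ B, ∀ i, MemLp (X i) ⊤ P)
    -- B is a weak*-closed convex cone: B equals its bipolar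
    (hBclosed : B = {X : Fin d → Ω → ℝ | (∀ i, MemLp (X i) ⊤ P) ∧
        ∀ W : Fin d → Ω → ℝ, (∀ i, Integrable (W i) P) →
          (∀ Y ∈ B, ∫ ω, ∑ i, Y i ω * W i ω ∂P ≤ 0) →
          ∫ ω, ∑ i, X i ω * W i ω ∂P ≤ 0})
    (V : Fin d → Ω → ℝ)
    (hVbdd : ∀ i, MemLp (V i) ⊤ P)
    (hVpos : ∀ i, ∀ᵐ ω ∂P, 0 < V i ω)
    (hVinv : ∀ i, MemLp (fun ω => (V i ω)⁻¹) ⊤ P)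
    (hV1 : V ⟨0, hd⟩ = fun _ => 1) :
    -- (B·V)(V) = {X ∈ L^∞(ℝ^d) : X·V ∈ B·V}
    (let BVV : Set (Fin d → Ω → ℝ) := {X | (∀ i, MemLp (X i) ⊤ P) ∧
        ∃ Y ∈ B, (fun ω => ∑ i, X i ω * V i ω) = fun ω => ∑ i, Y i ω * V i ω};
     B ⊆ BVV ∧
     ((B = BVV) ↔
       (∀ α : Ω → ℝ, MemLp α ⊤ P → (0 : Ω → ℝ) ≤ᵐ[P] α → ∀ i j : Fin d,
         (fun k ω => α ω * (V j ω * (if k = i then (1 : ℝ) else 0)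
            - V i ω * (if k = j then (1 : ℝ) else 0))) ∈ B)) ∧
     ((B = BVV) →
       {x : Ω → ℝ | ∃ Y ∈ B, x = fun ω => ∑ i, Y i ω * V i ω}
         = {x : Ω → ℝ | MemLp x ⊤ P ∧ ∀ Z : Ω → ℝ, Integrable Z P →
             (∀ y : Ω → ℝ, (∃ Y ∈ B, y = fun ω => ∑ i, Y i ω * V i ω) →
               ∫ ω, Z ω * y ω ∂P ≤ 0) →
             ∫ ω, Z ω * x ω ∂P ≤ 0})) :=
  stmt15_general (mΩ := mΩ) P d hd B hBsub hBclosed V hVbdd hV1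
end

section
/- Let Ω = {1,2,3,4}, ℙ uniform, F₀ trivial, F₁ = σ({1,2},{3,4}), F₂ = 2^Ω, and Q = co((¼,¼,¼,¼), (¼,¼,⅜,⅛), (⅜,⅛,¼,¼), (⅜,⅛,⅜,⅛)) (probability mass vectors). Define ρ(X) = max_{Q∈Q} E_Q[X] and ρ₁(X) = ess-sup_{Q∈Q} E_Q(X|F₁). Then ρ ∘ ρ₁ = ρ, i.e., ρ is time-consistent. -/
/-!
Every generator of `Q` gives mass `½` to each atom `{1,2}`, `{3,4}` of `F₁`, so `ρ` of an
`F₁`-measurable variable is its plain average. Moreover `Q` is rectangular: its generators are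
exactly the four pairings of a conditional law `(½,½)` or `(¾,¼)` on `{1,2}` with one on `{3,4}`.
Hence `ρ X = (max a b + max c d) / 2`, where `a, b` and `c, d` are the conditional expectations
of `X` under these laws on the two atoms, and this is also `ρ (ρ₁ X)`.
-/

theorem max_max_add_eq_max_add_max {α : Type*} [LinearOrder α] [Add α] [AddLeftMono α]
    [AddRightMono α] (a b c d : α) :
    max (max (a + c) (a + d)) (max (b + c) (b + d)) = max a b + max c d := by
  rw [max_add_add_left, max_add_add_left, max_add_add_right]

theorem sum_mul_vecCons_pair_pair {R : Type*} [CommSemiring R] (q : Fin 4 → R) (s t : R) :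
    ∑ i, q i * ![s, s, t, t] i = (q 0 + q 1) * s + (q 2 + q 3) * t := by
  simp [Fin.sum_univ_four]
  ring

/-- in the binary-branching example with
`Q = co((¼,¼,¼,¼),(¼,¼,⅜,⅛),(⅜,⅛,¼,¼),(⅜,⅛,⅜,⅛))`, the coherent risk measure
`ρ(X) = max_{Q∈Q} E_Q[X]` is time-consistent: `ρ ∘ ρ₁ = ρ`. -/
theorem stmt18 :
    let E : (Fin 4 → ℝ) → (Fin 4 → ℝ) → ℝ := fun q x => ∑ i, q i * x i
    let Q1 : Fin 4 → ℝ := ![1/4, 1/4, 1/4, 1/4]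
    let Q2 : Fin 4 → ℝ := ![1/4, 1/4, 3/8, 1/8]
    let Q3 : Fin 4 → ℝ := ![3/8, 1/8, 1/4, 1/4]
    let Q4 : Fin 4 → ℝ := ![3/8, 1/8, 3/8, 1/8]
    -- ρ(X) = sup over co(Q₁,…,Q₄) of E_Q X = max of the generator expectations
    let ρ : (Fin 4 → ℝ) → ℝ := fun x => max (max (E Q1 x) (E Q2 x)) (max (E Q3 x) (E Q4 x))
    -- ρ₁(X) = ess-sup over Q of E_Q(X|F₁), F₁ = σ({1,2},{3,4})
    let ρ₁ : (Fin 4 → ℝ) → (Fin 4 → ℝ) := fun x =>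
      ![max ((3 * x 0 + x 1) / 4) ((x 0 + x 1) / 2),
        max ((3 * x 0 + x 1) / 4) ((x 0 + x 1) / 2),
        max ((3 * x 2 + x 3) / 4) ((x 2 + x 3) / 2),
        max ((3 * x 2 + x 3) / 4) ((x 2 + x 3) / 2)]
    -- conclusion: ρ ∘ ρ₁ = ρ, i.e. ρ is (weakly) time-consistent
    ∀ x : Fin 4 → ℝ, ρ (ρ₁ x) = ρ x := by
  intro E Q1 Q2 Q3 Q4 ρ ρ₁ x
  set a := (x 0 + x 1) / 2
  set b := (3 * x 0 + x 1) / 4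
  set c := (x 2 + x 3) / 2
  set d := (3 * x 2 + x 3) / 4
  have h_measurable (s t : ℝ) : ρ ![s, s, t, t] = (s + t) / 2 := by
    simp only [ρ, E, sum_mul_vecCons_pair_pair, Q1, Q2, Q3, Q4, Matrix.cons_val_zero,
      Matrix.cons_val_one, Matrix.cons_val_two, Matrix.cons_val_three]
    norm_num
    ring
  have h_rectangular : ρ x = (max a b + max c d) / 2 := by
    have hE1 : E Q1 x = (a + c) / 2 := by simp [E, Q1, Fin.sum_univ_four, a, c]; ring
    have hE2 : E Q2 x = (a + d) / 2 := by simp [E, Q2, Fin.sum_univ_four, a, d]; ring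
    have hE3 : E Q3 x = (b + c) / 2 := by simp [E, Q3, Fin.sum_univ_four, b, c]; ring
    have hE4 : E Q4 x = (b + d) / 2 := by simp [E, Q4, Fin.sum_univ_four, b, d]; ring
    simp only [ρ, hE1, hE2, hE3, hE4, max_div_div_right (zero_le_two : (0 : ℝ) ≤ 2),
      max_max_add_eq_max_add_max]
  change ρ ![max b a, max b a, max d c, max d c] = ρ x
  rw [h_measurable, h_rectangular, max_comm b, max_comm d]
end

section
/- Let Ω = [1,2]^{[0,1]} with product σ-algebra and product of Lebesgue measures ℙ, X a coordinate random variable with uniform [1,2] law, and suppose (Xₙ) is a uniformly bounded sequence converging weak* to X in L^∞ and (Wₙ) a sequence of random variables each independent of X with Xₙ ≤ Wₙ a.s. and E[X] = liminf E[Wₙ]. Then a contradiction follows; specifically, one derives E[X] ≥ ‖X‖_{L^{2p}} for all p ∈ ℕ, hence 3/2 = E[X] ≥ ess-sup X = 2, which is false. -/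
/-!
Test the weak* convergence against `Z = 𝟙{X ≥ 7/4}`, a nonnegative function of `X`, hence
independent of every `Wₙ`. Then `E[Z Xₙ] ≤ E[Z Wₙ] = E[Z] E[Wₙ]`, and letting `n → ∞` gives
`E[Z X] ≤ E[Z] liminf E[Wₙ] = E[Z] E[X]`. For `X` uniform on `[1,2]` this reads
`15/32 ≤ 1/4 · 3/2`, which is false: `Z` puts its weight where `X` exceeds its mean.
-/

open MeasureTheory Filter ProbabilityTheory Set

theorem integral_mul_le_integral_mul_integral_of_indepFun {Ω : Type*} {mΩ : MeasurableSpace Ω}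
    {μ : Measure Ω} {Z Y W : Ω → ℝ} (hZW : IndepFun Z W μ) (hZ : Integrable Z μ)
    (hW : Integrable W μ) (hZ_nonneg : 0 ≤ᵐ[μ] Z) (hZY : Integrable (fun ω => Z ω * Y ω) μ)
    (hYW : Y ≤ᵐ[μ] W) :
    ∫ ω, Z ω * Y ω ∂μ ≤ (∫ ω, Z ω ∂μ) * ∫ ω, W ω ∂μ :=
  calc ∫ ω, Z ω * Y ω ∂μ ≤ ∫ ω, Z ω * W ω ∂μ := by
        refine integral_mono_ae hZY (hZW.integrable_mul hZ hW) ?_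
        filter_upwards [hZ_nonneg, hYW] with ω hZω hYWω
        exact mul_le_mul_of_nonneg_left hYWω hZω
    _ = (∫ ω, Z ω ∂μ) * ∫ ω, W ω ∂μ := hZW.integral_mul_eq_mul_integral hZ.1 hW.1

/-- In `ℝ` the `liminf` of a sequence that is not cobounded is the junk value `0`, which `hv`
excludes. -/
theorem Real.le_mul_liminf_of_tendsto {ι : Type*} {l : Filter ι} {u v : ι → ℝ} {A k : ℝ}
    (hu : Tendsto u l (nhds A)) (hk : 0 < k) (huv : ∀ᶠ i in l, u i ≤ k * v i)
    (hv : liminf v l ≠ 0) : A ≤ k * liminf v l := by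
  have hcob : IsCoboundedUnder (· ≥ ·) l v := by
    by_contra h
    exact hv (Real.liminf_of_not_isCoboundedUnder h)
  rw [← div_le_iff₀' hk]
  refine le_of_forall_lt_imp_le_of_dense fun a ha => le_liminf_of_le hcob ?_
  filter_upwards [hu.eventually (lt_mem_nhds ((lt_div_iff₀' hk).1 ha)), huv] with i hui hvi
  exact le_of_mul_le_mul_left (hui.le.trans hvi) hk

theorem setIntegral_Icc_id {a b : ℝ} (hab : a ≤ b) : ∫ x in Icc a b, x = (b ^ 2 - a ^ 2) / 2 := by
  rw [integral_Icc_eq_integral_Ioc, ← intervalIntegral.integral_of_le hab, integral_id]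

theorem setIntegral_Icc_indicator_Ici {a b c : ℝ} (hac : a ≤ c) (f : ℝ → ℝ) :
    ∫ x in Icc a b, (Ici c).indicator f x = ∫ x in Icc c b, f x := by
  have hset : Ici c ∩ Icc a b = Icc c b := by
    ext x
    simp only [mem_inter_iff, mem_Ici, mem_Icc]
    exact ⟨fun h => ⟨h.1, h.2.2⟩, fun h => ⟨h.1, hac.trans h.1, h.2⟩⟩
  rw [integral_indicator measurableSet_Ici, Measure.restrict_restrict measurableSet_Ici, hset]

theorem setIntegral_Icc_indicator_Ici_one {a b c : ℝ} (hac : a ≤ c) (hcb : c ≤ b) :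
    ∫ x in Icc a b, (Ici c).indicator 1 x = b - c := by
  rw [setIntegral_Icc_indicator_Ici hac, Pi.one_def, setIntegral_const, smul_eq_mul, mul_one,
    Real.volume_real_Icc_of_le hcb]

theorem setIntegral_Icc_indicator_Ici_one_mul_self {a b c : ℝ} (hac : a ≤ c) (hcb : c ≤ b) :
    ∫ x in Icc a b, (Ici c).indicator 1 x * x = (b ^ 2 - c ^ 2) / 2 := by
  have hfun : (fun x => (Ici c).indicator 1 x * x) = (Ici c).indicator fun x => x := by
    ext x
    simp [indicator_apply]
  rw [hfun, setIntegral_Icc_indicator_Ici hac, setIntegral_Icc_id hcb]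

theorem stmt19_general {Ω : Type} {mΩ : MeasurableSpace Ω} (P : Measure Ω)
    (X : Ω → ℝ) (hXmeas : Measurable X)
    -- X is uniformly distributed on [1,2]
    (hXlaw : Measure.map X P = volume.restrict (Set.Icc (1 : ℝ) 2))
    (Xn : ℕ → Ω → ℝ)
    -- (Xₙ) converges weak* to X in L^∞ = (L¹)*
    (hweak : ∀ Z : Ω → ℝ, Integrable Z P →
      Tendsto (fun n => ∫ ω, Z ω * Xn n ω ∂P) atTop (nhds (∫ ω, Z ω * X ω ∂P)))
    (W : ℕ → Ω → ℝ) (hWint : ∀ n, Integrable (W n) P)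
    -- each Wₙ is independent of X
    (hindep : ∀ n, IndepFun X (W n) P)
    -- Xₙ ≤ Wₙ a.s.
    (hle : ∀ n, Xn n ≤ᵐ[P] W n)
    -- E[X] = liminf E[Wₙ]
    (hE : ∫ ω, X ω ∂P = liminf (fun n => ∫ ω, W n ω ∂P) atTop) :
    False := by
  set g : ℝ → ℝ := (Ici (7 / 4 : ℝ)).indicator 1
  have hg : Measurable g := measurable_const.indicator measurableSet_Ici
  have hlaw (f : ℝ → ℝ) (hf : Measurable f) : ∫ ω, f (X ω) ∂P = ∫ x in Icc 1 2, f x := by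
    rw [← integral_map hXmeas.aemeasurable hf.aestronglyMeasurable, hXlaw]
  have hEX : ∫ ω, X ω ∂P = 3 / 2 := by
    rw [hlaw (fun x => x) measurable_id, setIntegral_Icc_id one_le_two]
    norm_num
  have hEZ : ∫ ω, g (X ω) ∂P = 1 / 4 := by
    rw [hlaw g hg, setIntegral_Icc_indicator_Ici_one (by norm_num) (by norm_num)]
    norm_num
  have hEZX : ∫ ω, g (X ω) * X ω ∂P = 15 / 32 := by
    rw [hlaw (fun x => g x * x) (hg.mul measurable_id),
      setIntegral_Icc_indicator_Ici_one_mul_self (by norm_num) (by norm_num)]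
    norm_num
  have hZ : Integrable (fun ω => g (X ω)) P := .of_integral_ne_zero (by rw [hEZ]; norm_num)
  have hconv := hweak _ hZ
  -- `g(X) Xₙ` is eventually integrable because its integral tends to `15/32 ≠ 0`.
  have hbound : ∀ᶠ n in atTop, ∫ ω, g (X ω) * Xn n ω ∂P ≤ 1 / 4 * ∫ ω, W n ω ∂P := by
    filter_upwards [hconv.eventually_ne (b₂ := 0) (by rw [hEZX]; norm_num)] with n hn
    rw [← hEZ]
    exact integral_mul_le_integral_mul_integral_of_indepFun ((hindep n).comp hg measurable_id) hZ
      (hWint n) (ae_of_all _ fun ω => indicator_nonneg (fun _ _ => zero_le_one) _)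
      (.of_integral_ne_zero hn) (hle n)
  have hlim := Real.le_mul_liminf_of_tendsto hconv (by norm_num) hbound (by rw [← hE, hEX]; norm_num)
  rw [← hE, hEX, hEZX] at hlim
  norm_num at hlim

/-- Counterexample 7.28: on a probability space carrying a random variable
`X` uniformly distributed on `[1,2]` (e.g. a coordinate on `Ω = [1,2]^{[0,1]}` with the
product measure), suppose `(Xₙ)` is a uniformly bounded sequence converging weak* to `X`
in `L^∞` and `(Wₙ)` is a sequence of integrable random variables, each independent of
`X`, with `Xₙ ≤ Wₙ` a.s. and `E[X] = liminf E[Wₙ]`. Then a contradiction follows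
(one derives `E[X] ≥ ‖X‖_{L^{2p}}` for all `p`, hence `3/2 ≥ ess-sup X = 2`). -/
theorem stmt19 {Ω : Type} {mΩ : MeasurableSpace Ω} (P : Measure Ω) [IsProbabilityMeasure P]
    (X : Ω → ℝ) (hXmeas : Measurable X)
    -- X is uniformly distributed on [1,2]
    (hXlaw : Measure.map X P = volume.restrict (Set.Icc (1 : ℝ) 2))
    (Xn : ℕ → Ω → ℝ) (hXnmeas : ∀ n, Measurable (Xn n))
    -- (Xₙ) is uniformly bounded
    (C : ℝ) (hXnbdd : ∀ n, ∀ᵐ ω ∂P, |Xn n ω| ≤ C)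
    -- (Xₙ) converges weak* to X in L^∞ = (L¹)*
    (hweak : ∀ Z : Ω → ℝ, Integrable Z P →
      Tendsto (fun n => ∫ ω, Z ω * Xn n ω ∂P) atTop (nhds (∫ ω, Z ω * X ω ∂P)))
    (W : ℕ → Ω → ℝ) (hWint : ∀ n, Integrable (W n) P)
    -- each Wₙ is independent of X
    (hindep : ∀ n, IndepFun X (W n) P)
    -- Xₙ ≤ Wₙ a.s.
    (hle : ∀ n, Xn n ≤ᵐ[P] W n)
    -- E[X] = liminf E[Wₙ]
    (hE : ∫ ω, X ω ∂P = liminf (fun n => ∫ ω, W n ω ∂P) atTop) :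
    False :=
  stmt19_general (mΩ := mΩ) P X hXmeas hXlaw Xn hweak W hWint hindep hle hE
end
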